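/- Fix r > q ≥ log 6. Let Ω ⊂ ℂ be a domain whose complement contains at least two points, and suppose the annulus A = {z : d·e^{-r} < |z - o| < d·e^r} is contained in Ω with o ∈ ℂ \ Ω. Then for every z with d·e^{-(r-q)} < |z - o| < d·e^{r-q} and every nearest boundary point ζ ∈ ∂Ω of z, the annulus {w : dist(z,∂Ω)·e^{-q/2} ≤ |w - ζ| ≤ dist(z,∂Ω)·e^{q/2}} is contained in A (and hence in Ω). -/

import Mathlib

/-!
Write `ρ = |z - o|`, `δ = |z - ζ|` and `y = e^{q/2}`, so `y² ≥ 6`. The segment from `z ∈ Ω` to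
`o ∉ Ω` crosses `∂Ω`, hence `δ ≤ ρ`, and `ζ ∉ Ω` lies outside `A`. It cannot lie beyond the outer
circle, since `|ζ - o| ≤ δ + ρ ≤ 2ρ` and `ρ` is far below the outer radius; so `|ζ - o| ≤ d e^{-r}`.
The triangle inequality through `ζ` then places every `w` with `δ/y ≤ |w - ζ| ≤ δ y` inside `A`:
the lower bound needs `y² - 2y - 1 ≥ 0`, which is where `q ≥ log 6` enters.
-/

open Metric

theorem IsPreconnected.inter_frontier_nonempty {X : Type*} [TopologicalSpace X] {s t : Set X}
    (ht : IsPreconnected t) (hts : (t ∩ s).Nonempty) (hts' : (t \ s).Nonempty) :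
    (t ∩ frontier s).Nonempty := by
  by_contra h
  obtain ⟨x, hxt, hxs⟩ := hts
  obtain ⟨y, hyt, hys⟩ := hts'
  have hcover : t ⊆ interior s ∪ (closure s)ᶜ := fun p hp => by
    by_cases hc : p ∈ closure s
    · exact .inl (by_contra fun hi => h ⟨p, hp, hc, hi⟩)
    · exact .inr hc
  have hx : x ∈ interior s := (hcover hxt).resolve_right (not_not.2 (subset_closure hxs))
  have hsub : t ⊆ interior s := ht.subset_left_of_subset_union isOpen_interior
    isClosed_closure.isOpen_compl (disjoint_compl_right.mono_left interior_subset_closure)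
    hcover ⟨x, hxt, hx⟩
  exact hys (interior_subset (hsub hyt))

theorem infDist_frontier_le_dist_of_mem_of_notMem {E : Type*} [NormedAddCommGroup E]
    [NormedSpace ℝ E] {s : Set E} {x y : E} (hx : x ∈ s) (hy : y ∉ s) :
    infDist x (frontier s) ≤ dist x y := by
  obtain ⟨p, hp, hpf⟩ := (convex_segment x y).isPreconnected.inter_frontier_nonempty
    ⟨x, left_mem_segment ℝ x y, hx⟩ ⟨y, right_mem_segment ℝ x y, hy⟩
  calc infDist x (frontier s) ≤ dist x p := infDist_le_dist_of_mem hpf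
    _ ≤ dist x y := by linarith [dist_add_dist_of_mem_segment hp, dist_nonneg (x := p) (y := y)]

theorem lt_and_lt_of_mul_lt_of_lt_div {a b k ρ : ℝ} (hk : 1 ≤ k) (hρ : 0 ≤ ρ)
    (h₁ : a * k < ρ) (h₂ : ρ < b / k) : a < ρ ∧ ρ < b := by
  rw [lt_div_iff₀ (by linarith)] at h₂
  constructor <;> nlinarith

theorem dist_mem_Ioo_of_mem_core_of_nearest {X : Type*} [PseudoMetricSpace X] {o z ζ w : X}
    {a b y : ℝ} (hy0 : 0 < y) (hy6 : 6 ≤ y ^ 2)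
    (hζ : dist ζ o ≤ a ∨ b ≤ dist ζ o) (hnear : dist z ζ ≤ dist z o)
    (hz₁ : a * y ^ 2 < dist z o) (hz₂ : dist z o < b / y ^ 2)
    (hw₁ : dist z ζ / y ≤ dist w ζ) (hw₂ : dist w ζ ≤ dist z ζ * y) :
    dist w o ∈ Set.Ioo a b := by
  rw [lt_div_iff₀ (by positivity)] at hz₂
  rw [div_le_iff₀ hy0] at hw₁
  have hρ := dist_nonneg (x := z) (y := o)
  have hζo : dist ζ o ≤ dist z ζ + dist z o := by
    linarith [dist_triangle ζ z o, dist_comm ζ z]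
  have hζa : dist ζ o ≤ a := hζ.resolve_right fun h => by
    nlinarith [mul_le_mul_of_nonneg_left hy6 hρ]
  have ha : 0 ≤ a := dist_nonneg.trans hζa
  have hy : 2 * y ≤ y ^ 2 - 1 := by nlinarith
  constructor
  · have hδ : a * (y ^ 2 - 1) < dist z ζ := by linarith [dist_triangle z ζ o]
    have hwζ : 2 * a < dist w ζ := by nlinarith [mul_le_mul_of_nonneg_left hy ha]
    linarith [dist_triangle w o ζ, dist_comm o ζ]
  · have hay : a * y < dist z o := by nlinarith [mul_le_mul_of_nonneg_left hy ha]
    have hzy : dist z ζ * y ≤ dist z o * y := mul_le_mul_of_nonneg_right hnear hy0.le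
    have hwo : dist w o ≤ dist z o * y + a := by linarith [dist_triangle w ζ o]
    have hb : dist z o ≤ b * (y - 1) := by
      nlinarith [mul_le_mul_of_nonneg_left hy6 hρ]
    have hby : (dist z o * y + a) * y < b * y := by nlinarith
    linarith [lt_of_mul_lt_mul_right hby hy0.le]

theorem bp_lower_bound_annulus_general
    (Ω : Set ℂ) (hΩo : IsOpen Ω)
    (o : ℂ) (d r q : ℝ) (hq : Real.log 6 ≤ q) (ho : o ∉ Ω)
    (hA : ∀ z : ℂ, d * Real.exp (-r) < ‖z - o‖ →
      ‖z - o‖ < d * Real.exp r → z ∈ Ω)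
    (z ζ : ℂ)
    (hz1 : d * Real.exp (-(r - q)) < ‖z - o‖)
    (hz2 : ‖z - o‖ < d * Real.exp (r - q))
    (hζ : ζ ∈ frontier Ω)
    (hnear : ‖z - ζ‖ = Metric.infDist z (frontier Ω)) :
    ∀ w : ℂ,
      Metric.infDist z (frontier Ω) * Real.exp (-(q / 2)) ≤ ‖w - ζ‖ →
      ‖w - ζ‖ ≤ Metric.infDist z (frontier Ω) * Real.exp (q / 2) →
      d * Real.exp (-r) < ‖w - o‖ ∧ ‖w - o‖ < d * Real.exp r := by
  intro w hw1 hw2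
  have hy2 : Real.exp (q / 2) ^ 2 = Real.exp q := by rw [sq, ← Real.exp_add, add_halves]
  have hy6 : 6 ≤ Real.exp (q / 2) ^ 2 := hy2 ▸ (Real.log_le_iff_le_exp (by norm_num)).1 hq
  rw [show -(r - q) = -r + q by ring, Real.exp_add, ← hy2, ← mul_assoc] at hz1
  rw [Real.exp_sub, ← hy2, ← mul_div_assoc] at hz2
  rw [← hnear, Real.exp_neg, ← div_eq_mul_inv] at hw1
  rw [← hnear] at hw2
  simp only [← dist_eq_norm] at hz1 hz2 hw1 hw2 hA ⊢
  have hzΩ : z ∈ Ω := by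
    obtain ⟨h₁, h₂⟩ := lt_and_lt_of_mul_lt_of_lt_div (by linarith) dist_nonneg hz1 hz2
    exact hA z h₁ h₂
  have hζA : dist ζ o ≤ d * Real.exp (-r) ∨ d * Real.exp r ≤ dist ζ o := by
    by_contra! h
    exact (hΩo.frontier_eq ▸ hζ).2 (hA ζ h.1 h.2)
  have hzζ : dist z ζ ≤ dist z o := by
    rw [dist_eq_norm, hnear]; exact infDist_frontier_le_dist_of_mem_of_notMem hzΩ ho
  exact dist_mem_Ioo_of_mem_core_of_nearest (Real.exp_pos _) hy6 hζA hzζ hz1 hz2 hw1 hw2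

/-- Lower bound for the Beardon–Pommerenke function in the `q`-core of an annulus:
for `r > q ≥ log 6`, an annulus `A = {z : d·e^{-r} < |z-o| < d·e^r} ⊆ Ω` with `o ∉ Ω`,
any `z` in the `q`-core, and any nearest boundary point `ζ ∈ ∂Ω` of `z`,
the annulus `{w : δ(z)·e^{-q/2} ≤ |w-ζ| ≤ δ(z)·e^{q/2}}` is contained in `A`. -/
theorem bp_lower_bound_annulus
    (Ω : Set ℂ) (hΩo : IsOpen Ω) (hΩc : IsConnected Ω) (hnt : Set.Nontrivial Ωᶜ)
    (o : ℂ) (d r q : ℝ) (hd : 0 < d) (hq : Real.log 6 ≤ q) (hrq : q < r) (ho : o ∉ Ω)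
    (hA : ∀ z : ℂ, d * Real.exp (-r) < ‖z - o‖ →
      ‖z - o‖ < d * Real.exp r → z ∈ Ω)
    (z ζ : ℂ)
    (hz1 : d * Real.exp (-(r - q)) < ‖z - o‖)
    (hz2 : ‖z - o‖ < d * Real.exp (r - q))
    (hζ : ζ ∈ frontier Ω)
    (hnear : ‖z - ζ‖ = Metric.infDist z (frontier Ω)) :
    ∀ w : ℂ,
      Metric.infDist z (frontier Ω) * Real.exp (-(q / 2)) ≤ ‖w - ζ‖ →
      ‖w - ζ‖ ≤ Metric.infDist z (frontier Ω) * Real.exp (q / 2) →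
      d * Real.exp (-r) < ‖w - o‖ ∧ ‖w - o‖ < d * Real.exp r :=
  bp_lower_bound_annulus_general Ω hΩo o d r q hq ho hA z ζ hz1 hz2 hζ hnear
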